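/- Let D1 and D2 be strongly connected digraphs with rad(D1) < rad(D2), radii taken with respect to the maximum distance. Then Ecc(D1 ⊠ D2) = (A × V(D2)) ∪ (V(D1) × Ecc(D2)), where A is the set of all vertices u_k of D1 for which there exists a vertex u_p of D1 with ecc(u_p) ≥ rad(D2) and ecc(u_p) = d(u_p,u_k) (that is, A is the union of the eccentric-vertex sets of those vertices of D1 whose eccentricity is at least rad(D2)). -/
import Mathlib


/-- A digraph on a vertex type `V`: a set of directed edges (ordered pairs of
distinct vertices), i.e. an irreflexive adjacency relation (no loops, and no
parallel edges since edges form a set). -/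
structure Digr (V : Type*) where
  Adj : V → V → Prop
  loopless : ∀ v, ¬ Adj v v

namespace Digr

variable {V : Type*} {W : Type*}

/-- `D.Reaches u v` : there is a directed path (walk) from `u` to `v`. -/
def Reaches (D : Digr V) (u v : V) : Prop :=
  ∃ (n : ℕ) (f : Fin (n + 1) → V), f 0 = u ∧ f (Fin.last n) = v ∧
    ∀ i : Fin n, D.Adj (f i.castSucc) (f i.succ)

/-- A digraph is strongly connected if every vertex reaches every vertex. -/
def StronglyConnected (D : Digr V) : Prop := ∀ u v : V, D.Reaches u v

/-- The directed distance `→d(u,v)`: the length of a shortest directed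
`u`–`v` path. -/
noncomputable def ddist (D : Digr V) (u v : V) : ℕ :=
  sInf {n : ℕ | ∃ f : Fin (n + 1) → V, f 0 = u ∧ f (Fin.last n) = v ∧
    ∀ i : Fin n, D.Adj (f i.castSucc) (f i.succ)}

/-- The maximum distance `md(u,v) = max {→d(u,v), →d(v,u)}`. -/
noncomputable def mdist (D : Digr V) (u v : V) : ℕ :=
  max (D.ddist u v) (D.ddist v u)

/-- The eccentricity of a vertex with respect to the maximum distance. -/
noncomputable def ecc [Fintype V] (D : Digr V) (u : V) : ℕ :=
  Finset.univ.sup fun v => D.mdist u v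

/-- The radius with respect to the maximum distance. -/
noncomputable def rad [Fintype V] [Nonempty V] (D : Digr V) : ℕ :=
  Finset.univ.inf' Finset.univ_nonempty fun v => D.ecc v

/-- The diameter with respect to the maximum distance. -/
noncomputable def diam [Fintype V] (D : Digr V) : ℕ :=
  Finset.univ.sup fun v => D.ecc v

/-- Out-neighbourhood. -/
def outNbhd (D : Digr V) (v : V) : Set V := {u | D.Adj v u}

/-- In-neighbourhood. -/
def inNbhd (D : Digr V) (v : V) : Set V := {u | D.Adj u v}

/-- Neighbourhood `N(v) = N⁺(v) ∪ N⁻(v)`. -/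
def nbhd (D : Digr V) (v : V) : Set V := D.outNbhd v ∪ D.inNbhd v

/-- Closed neighbourhood `N[v] = N(v) ∪ {v}`. -/
def closedNbhd (D : Digr V) (v : V) : Set V := D.nbhd v ∪ {v}

/-- The boundary `∂(D)`. -/
noncomputable def boundary (D : Digr V) : Set V :=
  {v | ∃ u : V, ∀ w ∈ D.nbhd v, D.mdist u w ≤ D.mdist u v}

/-- The contour `Ct(D)`. -/
noncomputable def contour [Fintype V] (D : Digr V) : Set V :=
  {v | ∀ u ∈ D.nbhd v, D.ecc u ≤ D.ecc v}

/-- The eccentricity set `Ecc(D)`. -/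
noncomputable def eccSet [Fintype V] (D : Digr V) : Set V :=
  {v | ∃ u : V, D.ecc u = D.mdist u v}

/-- The periphery `Per(D) = {v : ecc(v) = diam(D)}`. -/
noncomputable def periphery [Fintype V] (D : Digr V) : Set V :=
  {v | D.ecc v = D.diam}

/-- The strong product of two digraphs. -/
def strongProd (D₁ : Digr V) (D₂ : Digr W) : Digr (V × W) where
  Adj p q :=
    (D₁.Adj p.1 q.1 ∧ p.2 = q.2) ∨ (p.1 = q.1 ∧ D₂.Adj p.2 q.2) ∨
      (D₁.Adj p.1 q.1 ∧ D₂.Adj p.2 q.2)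
  loopless := by
    rintro ⟨a, b⟩ (⟨h, -⟩ | ⟨-, h⟩ | ⟨h, -⟩)
    · exact D₁.loopless a h
    · exact D₂.loopless b h
    · exact D₁.loopless a h

end Digr

namespace Digr

variable {V : Type*} {W : Type*}

/-- ℕ-indexed walk of length `n`. -/
def natWalk (D : Digr V) (u v : V) (n : ℕ) : Prop :=
  ∃ g : ℕ → V, g 0 = u ∧ g n = v ∧ ∀ i < n, D.Adj (g i) (g (i + 1))

lemma walkSet_eq (D : Digr V) (u v : V) :
    {n : ℕ | ∃ f : Fin (n + 1) → V, f 0 = u ∧ f (Fin.last n) = v ∧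
      ∀ i : Fin n, D.Adj (f i.castSucc) (f i.succ)} = {n | D.natWalk u v n} := by
  ext n
  constructor
  · rintro ⟨f, h0, hl, hadj⟩
    refine ⟨fun i => f ⟨min i n, by omega⟩, ?_, ?_, ?_⟩
    · convert h0 using 2
      ext; simp
    · convert hl using 2
      ext; simp [Fin.last]
    · intro i hi
      have := hadj ⟨i, hi⟩
      have e1 : (⟨min i n, by omega⟩ : Fin (n + 1)) = (⟨i, hi⟩ : Fin n).castSucc := by
        ext; simp [Nat.min_eq_left (le_of_lt hi)]
      have e2 : (⟨min (i + 1) n, by omega⟩ : Fin (n + 1)) = (⟨i, hi⟩ : Fin n).succ := by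
        ext; simp [Nat.min_eq_left hi]
      show D.Adj (f ⟨min i n, by omega⟩) (f ⟨min (i + 1) n, by omega⟩)
      rw [e1, e2]; exact this
  · rintro ⟨g, h0, hl, hadj⟩
    exact ⟨fun i => g i.val, h0, hl, fun i => by simpa using hadj i.val i.isLt⟩

lemma ddist_eq (D : Digr V) (u v : V) :
    D.ddist u v = sInf {n | D.natWalk u v n} := by
  rw [ddist, walkSet_eq]

lemma ddist_le (D : Digr V) {u v : V} {n : ℕ} (h : D.natWalk u v n) :
    D.ddist u v ≤ n := by
  rw [ddist_eq]; exact Nat.sInf_le h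

lemma natWalk_self (D : Digr V) (u : V) : D.natWalk u u 0 :=
  ⟨fun _ => u, rfl, rfl, by omega⟩

lemma ddist_self (D : Digr V) (u : V) : D.ddist u u = 0 :=
  Nat.le_zero.mp (D.ddist_le (D.natWalk_self u))

lemma natWalk_ddist (D : Digr V) {u v : V} (h : ∃ n, D.natWalk u v n) :
    D.natWalk u v (D.ddist u v) := by
  rw [ddist_eq]
  exact Nat.sInf_mem h

lemma reaches_natWalk (D : Digr V) {u v : V} (h : D.Reaches u v) :
    ∃ n, D.natWalk u v n := by
  obtain ⟨n, hn⟩ := h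
  exact ⟨n, (Set.ext_iff.mp (walkSet_eq D u v) n).mp hn⟩

/-- Removing stays from a lazy walk. -/
lemma exists_natWalk_of_lazy (D : Digr V) (g : ℕ → V) :
    ∀ n : ℕ, (∀ i < n, g i = g (i + 1) ∨ D.Adj (g i) (g (i + 1))) →
      ∃ m ≤ n, D.natWalk (g 0) (g n) m := by
  intro n
  induction n with
  | zero => exact fun _ => ⟨0, le_refl 0, D.natWalk_self _⟩
  | succ n ih =>
    intro hl
    obtain ⟨m, hm, h, h0, hmn, hadj⟩ := ih (fun i hi => hl i (by omega))
    rcases hl n (by omega) with he | ha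
    · exact ⟨m, by omega, h, h0, by rw [hmn, he], hadj⟩
    · refine ⟨m + 1, by omega, fun i => if i ≤ m then h i else g (n + 1),
        by simp [h0], by simp, ?_⟩
      intro i hi
      rcases Nat.lt_or_ge i m with h1 | h1
      · have e1 : i ≤ m := by omega
        have e2 : i + 1 ≤ m := by omega
        simpa [e1, e2] using hadj i h1
      · have hei : i = m := by omega
        subst hei
        have e2 : ¬ (i + 1 ≤ i) := by omega
        simpa [e2, hmn] using ha
lemma natWalk_strongProd (D₁ : Digr V) (D₂ : Digr W) {u u' : V} {v v' : W} {a b : ℕ}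
    (h1 : D₁.natWalk u u' a) (h2 : D₂.natWalk v v' b) :
    (strongProd D₁ D₂).natWalk (u, v) (u', v') (max a b) := by
  obtain ⟨f, f0, fa, fadj⟩ := h1
  obtain ⟨g, g0, gb, gadj⟩ := h2
  refine ⟨fun i => (f (min i a), g (min i b)), by simp [f0, g0], by simp [fa, gb], ?_⟩
  intro i hi
  show (D₁.Adj (f (min i a)) (f (min (i + 1) a)) ∧ g (min i b) = g (min (i + 1) b)) ∨
    (f (min i a) = f (min (i + 1) a) ∧ D₂.Adj (g (min i b)) (g (min (i + 1) b))) ∨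
    (D₁.Adj (f (min i a)) (f (min (i + 1) a)) ∧ D₂.Adj (g (min i b)) (g (min (i + 1) b)))
  rcases Nat.lt_or_ge i a with ha | ha <;> rcases Nat.lt_or_ge i b with hb | hb
  · rw [show min i a = i by omega, show min (i + 1) a = i + 1 by omega,
      show min i b = i by omega, show min (i + 1) b = i + 1 by omega]
    exact Or.inr (Or.inr ⟨fadj i ha, gadj i hb⟩)
  · rw [show min i a = i by omega, show min (i + 1) a = i + 1 by omega,
      show min i b = b by omega, show min (i + 1) b = b by omega]
    exact Or.inl ⟨fadj i ha, rfl⟩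
  · rw [show min i a = a by omega, show min (i + 1) a = a by omega,
      show min i b = i by omega, show min (i + 1) b = i + 1 by omega]
    exact Or.inr (Or.inl ⟨rfl, gadj i hb⟩)
  · omega

lemma natWalk_proj (D₁ : Digr V) (D₂ : Digr W) {u u' : V} {v v' : W} {n : ℕ}
    (h : (strongProd D₁ D₂).natWalk (u, v) (u', v') n) :
    (∃ m ≤ n, D₁.natWalk u u' m) ∧ ∃ m ≤ n, D₂.natWalk v v' m := by
  obtain ⟨g, g0, gn, gadj⟩ := h
  constructor
  · have := D₁.exists_natWalk_of_lazy (fun i => (g i).1) n ?_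
    · rwa [g0, gn] at this
    · intro i hi
      rcases gadj i hi with ⟨h1, -⟩ | ⟨h1, -⟩ | ⟨h1, -⟩ <;> simp [h1]
  · have := D₂.exists_natWalk_of_lazy (fun i => (g i).2) n ?_
    · rwa [g0, gn] at this
    · intro i hi
      rcases gadj i hi with ⟨-, h1⟩ | ⟨-, h1⟩ | ⟨-, h1⟩ <;> simp [h1]

lemma ddist_strongProd (D₁ : Digr V) (D₂ : Digr W)
    (h₁ : ∀ u v, ∃ n, D₁.natWalk u v n) (h₂ : ∀ u v, ∃ n, D₂.natWalk u v n)
    (u u' : V) (v v' : W) :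
    (strongProd D₁ D₂).ddist (u, v) (u', v') = max (D₁.ddist u u') (D₂.ddist v v') := by
  have w1 := D₁.natWalk_ddist (h₁ u u')
  have w2 := D₂.natWalk_ddist (h₂ v v')
  apply le_antisymm
  · exact (strongProd D₁ D₂).ddist_le (natWalk_strongProd D₁ D₂ w1 w2)
  · have wp := (strongProd D₁ D₂).natWalk_ddist ⟨_, natWalk_strongProd D₁ D₂ w1 w2⟩
    obtain ⟨⟨m1, hm1, hw1⟩, ⟨m2, hm2, hw2⟩⟩ := natWalk_proj D₁ D₂ wp
    exact max_le (le_trans (D₁.ddist_le hw1) hm1) (le_trans (D₂.ddist_le hw2) hm2)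

lemma mdist_self (D : Digr V) (u : V) : D.mdist u u = 0 := by
  simp [mdist, ddist_self]

lemma mdist_strongProd (D₁ : Digr V) (D₂ : Digr W)
    (h₁ : ∀ u v, ∃ n, D₁.natWalk u v n) (h₂ : ∀ u v, ∃ n, D₂.natWalk u v n)
    (u u' : V) (v v' : W) :
    (strongProd D₁ D₂).mdist (u, v) (u', v') = max (D₁.mdist u u') (D₂.mdist v v') := by
  rw [mdist, mdist, mdist, ddist_strongProd D₁ D₂ h₁ h₂, ddist_strongProd D₁ D₂ h₁ h₂]
  omega

lemma mdist_le_ecc [Fintype V] (D : Digr V) (u v : V) : D.mdist u v ≤ D.ecc u :=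
  Finset.le_sup (Finset.mem_univ v)

lemma rad_le_ecc [Fintype V] [Nonempty V] (D : Digr V) (u : V) : D.rad ≤ D.ecc u :=
  Finset.inf'_le _ (Finset.mem_univ u)

lemma exists_center [Fintype V] [Nonempty V] (D : Digr V) : ∃ c : V, D.ecc c = D.rad := by
  obtain ⟨c, -, hc⟩ := Finset.exists_mem_eq_inf' (Finset.univ_nonempty (α := V))
    fun v => D.ecc v
  exact ⟨c, hc.symm⟩

lemma ecc_strongProd [Fintype V] [Fintype W] (D₁ : Digr V) (D₂ : Digr W)
    (h₁ : ∀ u v, ∃ n, D₁.natWalk u v n) (h₂ : ∀ u v, ∃ n, D₂.natWalk u v n) (u : V) (v : W) :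
    (strongProd D₁ D₂).ecc (u, v) = max (D₁.ecc u) (D₂.ecc v) := by
  apply le_antisymm
  · apply Finset.sup_le
    rintro ⟨u', v'⟩ -
    rw [mdist_strongProd D₁ D₂ h₁ h₂]
    exact max_le_max (D₁.mdist_le_ecc u u') (D₂.mdist_le_ecc v v')
  · apply max_le
    · apply Finset.sup_le
      intro u' _
      have : D₁.mdist u u' = (strongProd D₁ D₂).mdist (u, v) (u', v) := by
        rw [mdist_strongProd D₁ D₂ h₁ h₂, mdist_self]; omega
      rw [this]
      exact (strongProd D₁ D₂).mdist_le_ecc (u, v) (u', v)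
    · apply Finset.sup_le
      intro v' _
      have : D₂.mdist v v' = (strongProd D₁ D₂).mdist (u, v) (u, v') := by
        rw [mdist_strongProd D₁ D₂ h₁ h₂, mdist_self]; omega
      rw [this]
      exact (strongProd D₁ D₂).mdist_le_ecc (u, v) (u, v')

end Digr

/-- if `rad(D₁) < rad(D₂)` then
`Ecc(D₁ ⊠ D₂) = (A × V(D₂)) ∪ (V(D₁) × Ecc(D₂))`, where `A` is the union of
the eccentric-vertex sets of those vertices of `D₁` whose eccentricity is at
least `rad(D₂)`. -/
theorem eccSet_strongProd_of_rad_lt {V W : Type*} [Fintype V] [Fintype W]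
    [Nonempty V] [Nonempty W]
    (D₁ : Digr V) (D₂ : Digr W)
    (h₁ : D₁.StronglyConnected) (h₂ : D₂.StronglyConnected)
    (hr : D₁.rad < D₂.rad) :
    (D₁.strongProd D₂).eccSet =
      ({u_k : V | ∃ u_p : V, D₂.rad ≤ D₁.ecc u_p ∧
          D₁.ecc u_p = D₁.mdist u_p u_k} ×ˢ (Set.univ : Set W)) ∪
      ((Set.univ : Set V) ×ˢ D₂.eccSet) := by
  have h₁' : ∀ u v, ∃ n, D₁.natWalk u v n := fun u v => D₁.reaches_natWalk (h₁ u v)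
  have h₂' : ∀ u v, ∃ n, D₂.natWalk u v n := fun u v => D₂.reaches_natWalk (h₂ u v)
  ext ⟨u_k, v_k⟩
  simp only [Digr.eccSet, Set.mem_setOf_eq, Set.mem_union, Set.mem_prod, Set.mem_univ,
    and_true, true_and]
  constructor
  · rintro ⟨⟨u_p, v_p⟩, hpk⟩
    rw [Digr.ecc_strongProd D₁ D₂ h₁' h₂', Digr.mdist_strongProd D₁ D₂ h₁' h₂'] at hpk
    have ha := D₁.mdist_le_ecc u_p u_k
    have hb := D₂.mdist_le_ecc v_p v_k
    have hr2 := D₂.rad_le_ecc v_p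
    rcases (by omega :
        (D₁.ecc u_p = D₁.mdist u_p u_k ∧ D₂.ecc v_p ≤ D₁.ecc u_p) ∨
        D₂.ecc v_p = D₂.mdist v_p v_k) with ⟨he, hle⟩ | he
    · exact Or.inl ⟨u_p, by omega, he⟩
    · exact Or.inr ⟨v_p, he⟩
  · rintro (⟨u_p, hle, heq⟩ | ⟨v_p, heq⟩)
    · obtain ⟨c, hc⟩ := D₂.exists_center
      refine ⟨(u_p, c), ?_⟩
      rw [Digr.ecc_strongProd D₁ D₂ h₁' h₂', Digr.mdist_strongProd D₁ D₂ h₁' h₂']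
      have := D₂.mdist_le_ecc c v_k
      omega
    · obtain ⟨c, hc⟩ := D₁.exists_center
      refine ⟨(c, v_p), ?_⟩
      rw [Digr.ecc_strongProd D₁ D₂ h₁' h₂', Digr.mdist_strongProd D₁ D₂ h₁' h₂']
      have h3 := D₁.mdist_le_ecc c u_k
      have h4 := D₂.rad_le_ecc v_p
      omega
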